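/- arXiv:1806.06311 — 3 statements merged into one kernel-verified Lean document; each statement's English description precedes it below -/
import Mathlib

section
/- Let 0 < r < 1, let G ⊆ ℂ be a bounded domain with r𝔻 ⊆ G ⊆ 𝔻, let n ≥ 2, and for ε > 0 set G^n_ε = { z ∈ Gⁿ : |z₁⋯z_n| < ε }. Fix x, y ∈ r𝔻 ∖ {0} and set X = (x,…,x,0), Y = (0,y,…,y) ∈ ℂⁿ. Then the Lempert function l_{G^n_ε}(X,Y) tends to ∞ as ε → 0⁺; precisely, for every M > 0 there exists ε₀ > 0 such that for all 0 < ε ≤ ε₀ one has l_{G^n_ε}(X,Y) > M. -/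
open scoped ENNReal BigOperators

/-- The inverse hyperbolic tangent, `arctanh t = (1/2) log ((1+t)/(1-t))`. -/
noncomputable def arctanh (t : ℝ) : ℝ := (1 / 2) * Real.log ((1 + t) / (1 - t))

/-- The Poincaré distance on the unit disc:
`ρ(a,b) = arctanh (|a - b| / |1 - conj a * b|)`. -/
noncomputable def rho (a b : ℂ) : ℝ :=
  arctanh (‖a - b‖ / ‖1 - (starRingEnd ℂ) a * b‖)

/-- The open unit disc in `ℂ`. -/
def uDisc : Set ℂ := Metric.ball 0 1

/-- The domain `G^n_ε = { z ∈ Gⁿ : |z₁ ⋯ z_n| < ε }` inside `ℂⁿ`. -/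
def polyDom (n : ℕ) (G : Set ℂ) (ε : ℝ) : Set (Fin n → ℂ) :=
  { z | (∀ i, z i ∈ G) ∧ ‖∏ i, z i‖ < ε }

/-- The Carathéodory pseudo-distance of an open set `M ⊆ ℂⁿ`:
the supremum of `ρ (g x) (g y)` over holomorphic `g : M → 𝔻`. -/
noncomputable def cara {n : ℕ} (M : Set (Fin n → ℂ)) (x y : Fin n → ℂ) : ℝ :=
  sSup { d | ∃ g : (Fin n → ℂ) → ℂ,
    DifferentiableOn ℂ g M ∧ (∀ z ∈ M, g z ∈ uDisc) ∧ d = rho (g x) (g y) }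

/-- The Lempert function of an open set `M ⊆ ℂⁿ`, with values in `[0,∞]`:
the infimum of `ρ(a,b)` over holomorphic discs `f : 𝔻 → M` with `f a = x`, `f b = y`. -/
noncomputable def lempert {n : ℕ} (M : Set (Fin n → ℂ)) (x y : Fin n → ℂ) : ℝ≥0∞ :=
  sInf { d | ∃ (f : ℂ → Fin n → ℂ) (a b : ℂ),
    a ∈ uDisc ∧ b ∈ uDisc ∧ DifferentiableOn ℂ f uDisc ∧
    (∀ z ∈ uDisc, f z ∈ M) ∧ f a = x ∧ f b = y ∧ d = ENNReal.ofReal (rho a b) }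

/-- The `m`-chain Kobayashi distance `k^{(m)}_M(x,y)` of an open set `M ⊆ ℂⁿ`,
with values in `[0,∞]`: the infimum over chains `x = p₀, …, p_m = y` in `M`,
holomorphic discs `fᵢ : 𝔻 → M` and points `aᵢ, bᵢ ∈ 𝔻` with `fᵢ aᵢ = p_{i-1}`,
`fᵢ bᵢ = pᵢ`, of `∑ ρ(aᵢ, bᵢ)`. -/
noncomputable def kChain {n : ℕ} (M : Set (Fin n → ℂ)) (m : ℕ) (x y : Fin n → ℂ) : ℝ≥0∞ :=
  sInf { d | ∃ (p : Fin (m + 1) → Fin n → ℂ) (f : Fin m → ℂ → Fin n → ℂ)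
      (a b : Fin m → ℂ),
    p 0 = x ∧ p (Fin.last m) = y ∧ (∀ i, p i ∈ M) ∧
    (∀ i : Fin m, a i ∈ uDisc ∧ b i ∈ uDisc ∧
      DifferentiableOn ℂ (f i) uDisc ∧ (∀ z ∈ uDisc, f i z ∈ M) ∧
      f i (a i) = p i.castSucc ∧ f i (b i) = p i.succ) ∧
    d = ∑ i : Fin m, ENNReal.ofReal (rho (a i) (b i)) }

/-- The Kobayashi pseudo-distance `k_M = inf_{m ≥ 1} k^{(m)}_M`. -/
noncomputable def kobayashi {n : ℕ} (M : Set (Fin n → ℂ)) (x y : Fin n → ℂ) : ℝ≥0∞ :=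
  ⨅ m : ℕ, kChain M (m + 1) x y

/-- The point `X = (x, …, x, 0) ∈ ℂⁿ`. -/
def Xpt (n : ℕ) (x : ℂ) : Fin n → ℂ := fun i => if (i : ℕ) < n - 1 then x else 0

/-- The point `Y = (0, y, …, y) ∈ ℂⁿ`. -/
def Ypt (n : ℕ) (y : ℂ) : Fin n → ℂ := fun i => if (i : ℕ) = 0 then 0 else y

noncomputable def mo (p z : ℂ) : ℂ := (p - z) / (1 - (starRingEnd ℂ) p * z)

lemma mo_normSq_key (p z : ℂ) :
    Complex.normSq (1 - (starRingEnd ℂ) p * z) - Complex.normSq (p - z)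
      = (1 - Complex.normSq p) * (1 - Complex.normSq z) := by
  simp only [Complex.normSq_apply, Complex.sub_re, Complex.sub_im, Complex.one_re,
    Complex.one_im, Complex.mul_re, Complex.mul_im, Complex.conj_re, Complex.conj_im]
  ring

lemma mo_abs_lt_abs {p z : ℂ} (hp : ‖p‖ < 1) (hz : ‖z‖ < 1) :
    ‖p - z‖ < ‖1 - (starRingEnd ℂ) p * z‖ := by
  have h1 : Complex.normSq p < 1 := by
    rw [← Complex.sq_norm]; nlinarith [norm_nonneg p]
  have h2 : Complex.normSq z < 1 := by
    rw [← Complex.sq_norm]; nlinarith [norm_nonneg z]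
  have key := mo_normSq_key p z
  have : Complex.normSq (p - z) < Complex.normSq (1 - (starRingEnd ℂ) p * z) := by nlinarith
  rw [Complex.norm_def, Complex.norm_def]
  exact Real.sqrt_lt_sqrt (Complex.normSq_nonneg _) this

lemma mo_denom_pos {p z : ℂ} (hp : ‖p‖ < 1) (hz : ‖z‖ < 1) :
    0 < ‖1 - (starRingEnd ℂ) p * z‖ :=
  lt_of_le_of_lt (norm_nonneg _) (mo_abs_lt_abs hp hz)

lemma mo_denom_ne {p z : ℂ} (hp : ‖p‖ < 1) (hz : ‖z‖ < 1) :
    (1 : ℂ) - (starRingEnd ℂ) p * z ≠ 0 := by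
  intro h
  have := mo_denom_pos hp hz
  rw [h] at this; simp at this

lemma mo_abs_lt {p z : ℂ} (hp : ‖p‖ < 1) (hz : ‖z‖ < 1) :
    ‖mo p z‖ < 1 := by
  rw [mo, norm_div, div_lt_one (mo_denom_pos hp hz)]
  exact mo_abs_lt_abs hp hz

lemma mo_zero (p : ℂ) : mo p 0 = p := by simp [mo]

lemma mo_self (p : ℂ) : mo p p = 0 := by simp [mo]

lemma mo_invol {p z : ℂ} (hp : ‖p‖ < 1) (hz : ‖z‖ < 1) :
    mo p (mo p z) = z := by
  have hD := mo_denom_ne hp hz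
  have h2 : (1 : ℂ) - (starRingEnd ℂ) p * p ≠ 0 := by
    intro h
    have : ‖(starRingEnd ℂ) p * p‖ < 1 := by
      rw [norm_mul, Complex.norm_conj]; nlinarith [norm_nonneg p]
    rw [sub_eq_zero] at h
    rw [← h] at this; simp at this
  have hd2 : (1 : ℂ) - (starRingEnd ℂ) p * ((p - z) / (1 - (starRingEnd ℂ) p * z)) ≠ 0 := by
    have := mo_denom_ne hp (mo_abs_lt hp hz)
    simpa [mo] using this
  simp only [mo]
  rw [div_eq_iff hd2]
  have hD' : (1 : ℂ) - z * (starRingEnd ℂ) p ≠ 0 := by rwa [mul_comm] at hD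
  field_simp
  ring

lemma mem_uDisc_iff {z : ℂ} : z ∈ uDisc ↔ ‖z‖ < 1 := by
  simp [uDisc, Metric.mem_ball, Complex.dist_eq]

lemma mo_diff {p : ℂ} (hp : ‖p‖ < 1) :
    DifferentiableOn ℂ (mo p) (Metric.ball 0 1) := by
  apply DifferentiableOn.div
  · exact ((differentiable_const p).sub differentiable_id).differentiableOn
  · exact ((differentiable_const (1 : ℂ)).sub
      ((differentiable_const _).mul differentiable_id)).differentiableOn
  · intro z hz
    exact mo_denom_ne hp (by simpa [Metric.mem_ball, Complex.dist_eq] using hz)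

/-- Schwarz–Pick lower bound. -/
lemma schwarz_lower {x : ℂ} (hx : ‖x‖ < 1) {F : ℂ → ℂ}
    (hd : DifferentiableOn ℂ F (Metric.ball 0 1))
    (hmaps : ∀ z ∈ Metric.ball (0 : ℂ) 1, ‖F z‖ < 1)
    (hF0 : F 0 = x) {z : ℂ} (hz : ‖z‖ < 1) :
    ‖x‖ - 2 * ‖z‖ ≤ ‖F z‖ := by
  have hzb : z ∈ Metric.ball (0 : ℂ) 1 := by simpa [Metric.mem_ball, Complex.dist_eq] using hz
  have hmapsTo : Set.MapsTo F (Metric.ball 0 1) (Metric.ball 0 1) := by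
    intro w hw
    simpa [Metric.mem_ball, Complex.dist_eq] using hmaps w hw
  set g : ℂ → ℂ := fun w => mo x (F w) with hg
  have hgd : DifferentiableOn ℂ g (Metric.ball 0 1) := (mo_diff hx).comp hd hmapsTo
  have hgmaps : Set.MapsTo g (Metric.ball 0 1) (Metric.ball 0 1) := by
    intro w hw
    simp only [hg, Metric.mem_ball, Complex.dist_eq, sub_zero]
    exact mo_abs_lt hx (hmaps w hw)
  have hg0 : g 0 = 0 := by simp [hg, hF0, mo_self]
  have hs := Complex.norm_le_norm_of_mapsTo_ball hgd (hgmaps.mono_right Metric.ball_subset_closedBall) hg0 hz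
  have hFz : ‖F z‖ < 1 := hmaps z hzb
  have heq : x - F z = g z * (1 - (starRingEnd ℂ) x * F z) := by
    simp only [hg, mo]
    rw [div_mul_cancel₀]
    exact mo_denom_ne hx hFz
  have hden : ‖1 - (starRingEnd ℂ) x * F z‖ ≤ 2 := by
    calc ‖1 - (starRingEnd ℂ) x * F z‖
        ≤ ‖1‖ + ‖(starRingEnd ℂ) x * F z‖ :=
          norm_sub_le _ _
      _ ≤ 1 + 1 := by
          rw [norm_one, norm_mul, Complex.norm_conj]
          have := norm_nonneg x
          have := norm_nonneg (F z)
          nlinarith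
      _ = 2 := by norm_num
  have h1 : ‖x - F z‖ ≤ 2 * ‖z‖ := by
    rw [heq, norm_mul]
    have := norm_nonneg (g z)
    nlinarith [norm_nonneg (1 - (starRingEnd ℂ) x * F z)]
  have h2 : ‖x‖ ≤ ‖x - F z‖ + ‖F z‖ := by
    calc ‖x‖ = ‖(x - F z) + F z‖ := by rw [sub_add_cancel]
      _ ≤ _ := norm_add_le _ _
  linarith


/-- the Lempert function `l_{G^n_ε}(X,Y)` tends to `∞` as `ε → 0⁺`. -/
theorem lempert_tendsto_infty (r : ℝ) (hr0 : 0 < r) (hr1 : r < 1)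
    (G : Set ℂ) (hGopen : IsOpen G) (hGconn : IsConnected G)
    (hGbdd : Bornology.IsBounded G)
    (hrG : Metric.ball (0 : ℂ) r ⊆ G) (hG1 : G ⊆ Metric.ball (0 : ℂ) 1)
    (n : ℕ) (hn : 2 ≤ n)
    (x y : ℂ) (hx : x ∈ Metric.ball (0 : ℂ) r) (hx0 : x ≠ 0)
    (hy : y ∈ Metric.ball (0 : ℂ) r) (hy0 : y ≠ 0) :
    ∀ M : ℝ, 0 < M → ∃ ε₀ : ℝ, 0 < ε₀ ∧ ∀ ε : ℝ, 0 < ε → ε ≤ ε₀ →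
      ENNReal.ofReal M < lempert (polyDom n G ε) (Xpt n x) (Ypt n y) := by
  intro M hM
  haveI : NeZero n := ⟨by omega⟩
  have habs_x : ‖x‖ < 1 := by
    have : ‖x‖ < r := by simpa [Metric.mem_ball, Complex.dist_eq] using hx
    linarith
  have habs_y : ‖y‖ < 1 := by
    have : ‖y‖ < r := by simpa [Metric.mem_ball, Complex.dist_eq] using hy
    linarith
  have hsx0 : 0 < ‖x‖ := norm_pos_iff.mpr hx0
  set s : ℝ := ‖x‖ / 4 with hs_def
  set c : ℝ := ‖x‖ / 2 with hc_def
  have hs0 : 0 < s := by positivity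
  have hc0 : 0 < c := by positivity
  have hs1 : s < 1 := by rw [hs_def]; linarith
  set E : ℝ := Real.exp (2 * (M + 1)) with hE_def
  have hE1 : 1 < E := by
    rw [hE_def]
    exact Real.one_lt_exp_iff.mpr (by linarith)
  set τ : ℝ := (E - 1) / (E + 1) with hτ_def
  have hτ0 : 0 ≤ τ := by apply div_nonneg <;> linarith
  have hτ1 : τ < 1 := by rw [hτ_def, div_lt_one (by linarith)]; linarith
  set R : ℝ := (1 + τ) / 2 with hR_def
  have hR0 : 0 < R := by rw [hR_def]; linarith
  have hτR : τ < R := by rw [hR_def]; linarith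
  have hR1 : R < 1 := by rw [hR_def]; linarith
  have hyb : 0 < ‖y‖ ^ (n - 1) := pow_pos (norm_pos_iff.mpr hy0) _
  set q : ℝ := max s (τ / R) with hq_def
  have hq1 : q < 1 := max_lt hs1 ((div_lt_one hR0).mpr hτR)
  have hq0 : 0 ≤ q := le_trans hs0.le (le_max_left _ _)
  obtain ⟨m, hm⟩ := exists_pow_lt_of_lt_one hyb hq1
  refine ⟨c * s ^ m, by positivity, ?_⟩
  intro ε hε hεle
  have key : ENNReal.ofReal (M + 1) ≤ lempert (polyDom n G ε) (Xpt n x) (Ypt n y) := by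
    unfold lempert
    apply le_sInf
    rintro d ⟨f, a, b, ha, hb, hdiff, hmaps, hfa, hfb, rfl⟩
    apply ENNReal.ofReal_le_ofReal
    by_contra hcon
    push_neg at hcon
    have habs_a : ‖a‖ < 1 := mem_uDisc_iff.mp ha
    have habs_b : ‖b‖ < 1 := mem_uDisc_iff.mp hb
    set t : ℝ := ‖a - b‖ / ‖1 - (starRingEnd ℂ) a * b‖ with ht_def
    have ht0 : 0 ≤ t := by positivity
    have ht1 : t < 1 := (div_lt_one (mo_denom_pos habs_a habs_b)).mpr
      (mo_abs_lt_abs habs_a habs_b)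
    have hcon' : (1 / 2 : ℝ) * Real.log ((1 + t) / (1 - t)) < M + 1 := by
      unfold rho arctanh at hcon
      exact hcon
    have hfrac_pos : (0 : ℝ) < (1 + t) / (1 - t) := by
      apply div_pos <;> linarith
    have hlogE : (1 + t) / (1 - t) < E := by
      rw [hE_def]
      exact (Real.log_lt_iff_lt_exp hfrac_pos).mp (by linarith)
    have htτ : t < τ := by
      rw [hτ_def, lt_div_iff₀ (by linarith : (0:ℝ) < E + 1)]
      have := (div_lt_iff₀ (by linarith : (0:ℝ) < 1 - t)).mp hlogE
      nlinarith
    -- reduce to a = 0 via the Möbius map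
    set b' : ℂ := mo a b with hb'_def
    have habs_b' : ‖b'‖ = t := by rw [hb'_def, mo, norm_div]
    have hb'τ : ‖b'‖ < τ := by rw [habs_b']; exact htτ
    have hb'1 : ‖b'‖ < 1 := lt_of_lt_of_le hb'τ hτ1.le
    have hmo_maps : Set.MapsTo (mo a) (Metric.ball 0 1) uDisc := by
      intro w hw
      rw [mem_uDisc_iff]
      exact mo_abs_lt habs_a (by simpa [Metric.mem_ball, Complex.dist_eq] using hw)
    have hF : DifferentiableOn ℂ (fun z => f (mo a z)) (Metric.ball 0 1) :=
      hdiff.comp (mo_diff habs_a) hmo_maps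
    have hFmem : ∀ z : ℂ, ‖z‖ < 1 → f (mo a z) ∈ polyDom n G ε := by
      intro z hz
      exact hmaps _ (hmo_maps (by simpa [Metric.mem_ball, Complex.dist_eq] using hz))
    have hFiabs : ∀ (i : Fin n) (z : ℂ), ‖z‖ < 1 →
        ‖f (mo a z) i‖ < 1 := by
      intro i z hz
      have := hG1 ((hFmem z hz).1 i)
      simpa [Metric.mem_ball, Complex.dist_eq] using this
    have hFidiff : ∀ i : Fin n, DifferentiableOn ℂ (fun z => f (mo a z) i)
        (Metric.ball 0 1) := fun i => differentiableOn_pi.mp hF i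
    -- first coordinate
    have hF00 : f (mo a 0) 0 = x := by
      rw [mo_zero, hfa]
      unfold Xpt
      rw [if_pos]
      simp only [Fin.val_zero]
      omega
    have hlow : ∀ z : ℂ, ‖z‖ ≤ s → c ≤ ‖f (mo a z) 0‖ := by
      intro z hz
      have hz1 : ‖z‖ < 1 := lt_of_le_of_lt hz hs1
      have := schwarz_lower habs_x (hFidiff 0) (fun w hw => hFiabs 0 w
        (by simpa [Metric.mem_ball, Complex.dist_eq] using hw)) hF00 hz1
      rw [hc_def]
      rw [hs_def] at hz
      linarith
    -- the product over the remaining coordinates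
    set P : ℂ → ℂ := fun z => ∏ i ∈ Finset.univ.erase (0 : Fin n), f (mo a z) i with hP_def
    have hPdiff : DifferentiableOn ℂ P (Metric.ball 0 1) :=
      DifferentiableOn.fun_finset_prod (fun i _ => hFidiff i)
    have hsplit : ∀ z : ℂ, f (mo a z) 0 * P z = ∏ i, f (mo a z) i := by
      intro z
      simp only [hP_def]
      exact Finset.mul_prod_erase Finset.univ _ (Finset.mem_univ 0)
    have hPsmall : ∀ z : ℂ, ‖z‖ ≤ s → ‖P z‖ ≤ ε / c := by
      intro z hz
      have hz1 : ‖z‖ < 1 := lt_of_le_of_lt hz hs1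
      have h1 : ‖f (mo a z) 0‖ * ‖P z‖ < ε := by
        rw [← norm_mul, hsplit]
        exact (hFmem z hz1).2
      have h2 := hlow z hz
      rw [le_div_iff₀ hc0]
      have h3 : c * ‖P z‖ ≤ ‖f (mo a z) 0‖ * ‖P z‖ :=
        mul_le_mul_of_nonneg_right h2 (norm_nonneg _)
      linarith
    have hP1 : ∀ z : ℂ, ‖z‖ < 1 → ‖P z‖ ≤ 1 := by
      intro z hz
      rw [hP_def]
      simp only
      rw [norm_prod]
      exact Finset.prod_le_one (fun i _ => norm_nonneg _)
        (fun i _ => (hFiabs i z hz).le)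
    have hPb' : ‖P b'‖ = ‖y‖ ^ (n - 1) := by
      have hfb' : f (mo a b') = Ypt n y := by
        rw [hb'_def, mo_invol habs_a habs_b, hfb]
      rw [hP_def]
      simp only [hfb']
      have : ∀ i ∈ Finset.univ.erase (0 : Fin n), Ypt n y i = y := by
        intro i hi
        unfold Ypt
        rw [if_neg]
        exact fun h => (Finset.mem_erase.mp hi).1 (Fin.ext h)
      rw [Finset.prod_congr rfl this, Finset.prod_const, norm_pow]
      congr 1
      rw [Finset.card_erase_of_mem (Finset.mem_univ _), Finset.card_univ, Fintype.card_fin]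
    -- case analysis on |b'|
    rcases le_or_gt (‖b'‖) s with hbs | hbs
    · have h1 : ‖y‖ ^ (n - 1) ≤ ε / c := by rw [← hPb']; exact hPsmall b' hbs
      have h2 : ε / c ≤ s ^ m := by
        rw [div_le_iff₀ hc0]
        calc ε ≤ c * s ^ m := hεle
          _ = s ^ m * c := mul_comm _ _
      have h3 : s ^ m ≤ q ^ m := pow_le_pow_left₀ hs0.le (le_max_left _ _) m
      linarith
    · -- annulus case
      set U : Set ℂ := Metric.ball 0 R \ Metric.closedBall 0 s with hU_def
      have hb'U : b' ∈ U := by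
        constructor
        · simp only [Metric.mem_ball, Complex.dist_eq, sub_zero]
          exact lt_trans hb'τ hτR
        · simp only [Metric.mem_closedBall, Complex.dist_eq, sub_zero, not_le]
          exact hbs
      have hUbdd : Bornology.IsBounded U := Metric.isBounded_ball.subset Set.diff_subset
      have hclU : ∀ w ∈ closure U, s ≤ ‖w‖ ∧ ‖w‖ ≤ R := by
        intro w hw
        have h1 : closure U ⊆ closure (Metric.ball (0:ℂ) R) ∩
            closure (Metric.closedBall (0:ℂ) s)ᶜ := by
          rw [hU_def, Set.diff_eq]
          exact closure_inter_subset_inter_closure _ _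
        have h2 := h1 hw
        rw [closure_ball (0:ℂ) (ne_of_gt hR0), closure_compl,
          interior_closedBall (0:ℂ) (ne_of_gt hs0)] at h2
        obtain ⟨h3, h4⟩ := h2
        constructor
        · have := h4
          simp only [Set.mem_compl_iff, Metric.mem_ball, Complex.dist_eq, sub_zero,
            not_lt] at this
          exact this
        · simpa [Metric.mem_closedBall, Complex.dist_eq] using h3
      set g : ℂ → ℂ := fun z => P z / z ^ m with hg_def
      have hVsub : Metric.ball (0:ℂ) R \ Metric.closedBall 0 s ⊆
          Metric.ball (0:ℂ) 1 \ {0} := by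
        intro w hw
        obtain ⟨hw1, hw2⟩ := hw
        simp only [Metric.mem_ball, Complex.dist_eq, sub_zero] at hw1
        simp only [Metric.mem_closedBall, Complex.dist_eq, sub_zero, not_le] at hw2
        constructor
        · simp only [Metric.mem_ball, Complex.dist_eq, sub_zero]
          linarith
        · simp only [Set.mem_singleton_iff]
          intro h
          rw [h] at hw2
          simp at hw2
          linarith
      have hVdiff : DifferentiableOn ℂ g (Metric.ball (0:ℂ) 1 \ {0}) := by
        apply DifferentiableOn.div
        · exact hPdiff.mono Set.diff_subset
        · exact (differentiable_pow m).differentiableOn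
        · intro z hz
          exact pow_ne_zero m hz.2
      have hgdc : DiffContOnCl ℂ g U := by
        constructor
        · exact hVdiff.mono hVsub
        · apply hVdiff.continuousOn.mono
          intro w hw
          obtain ⟨hws, hwR⟩ := hclU w hw
          constructor
          · simp only [Metric.mem_ball, Complex.dist_eq, sub_zero]
            linarith
          · simp only [Set.mem_singleton_iff]
            intro h
            rw [h] at hws
            simp at hws
            linarith
      have hfr : ∀ w ∈ frontier U, ‖g w‖ ≤ 1 / R ^ m := by
        intro w hw
        have hsub : frontier U ⊆ Metric.sphere (0:ℂ) R ∪ Metric.sphere (0:ℂ) s := by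
          rw [hU_def, Set.diff_eq]
          intro v hv
          have := frontier_inter_subset (Metric.ball (0:ℂ) R)
            (Metric.closedBall (0:ℂ) s)ᶜ hv
          rcases this with h | h
          · left
            rw [← frontier_ball (0:ℂ) (ne_of_gt hR0)]
            exact h.1
          · right
            rw [← frontier_closedBall (0:ℂ) (ne_of_gt hs0), ← frontier_compl]
            exact h.2
        have hRm : (0:ℝ) < R ^ m := pow_pos hR0 m
        rcases hsub hw with h | h
        · have hwR : ‖w‖ = R := by
            simpa [Metric.mem_sphere, Complex.dist_eq] using h
          have hw1 : ‖w‖ < 1 := by rw [hwR]; exact hR1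
          simp only [hg_def, norm_div, norm_pow, hwR]
          gcongr
          exact hP1 w hw1
        · have hws : ‖w‖ = s := by
            simpa [Metric.mem_sphere, Complex.dist_eq] using h
          have hw1 : ‖w‖ ≤ s := le_of_eq hws
          have hsm : (0:ℝ) < s ^ m := pow_pos hs0 m
          have hPw : ‖P w‖ ≤ ε / c := hPsmall w hw1
          have hεsm : ε / c ≤ s ^ m := by
            rw [div_le_iff₀ hc0]
            calc ε ≤ c * s ^ m := hεle
              _ = s ^ m * c := mul_comm _ _
          simp only [hg_def, norm_div, norm_pow, hws]
          have h1 : ‖P w‖ / s ^ m ≤ 1 := by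
            rw [div_le_one hsm]
            linarith
          have h2 : (1:ℝ) ≤ 1 / R ^ m := by
            rw [le_div_iff₀ hRm, one_mul]
            exact pow_le_one₀ hR0.le hR1.le
          linarith
      -- apply the maximum principle
      have hmax := Complex.norm_le_of_forall_mem_frontier_norm_le hUbdd hgdc hfr
        (subset_closure hb'U)
      have hb'ne : b' ≠ 0 := by
        intro h
        rw [h] at hbs
        simp at hbs
        linarith
      have hgb' : ‖P b'‖ = ‖g b'‖ * ‖b'‖ ^ m := by
        rw [hg_def]
        simp only [norm_div, norm_pow]
        rw [div_mul_cancel₀]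
        exact pow_ne_zero m (norm_ne_zero_iff.mpr hb'ne)
      have hRm : (0:ℝ) < R ^ m := pow_pos hR0 m
      have hstep : ‖P b'‖ ≤ (τ / R) ^ m := by
        rw [hgb']
        have h1 : ‖g b'‖ ≤ 1 / R ^ m := by
          exact hmax
        calc ‖g b'‖ * ‖b'‖ ^ m
            ≤ (1 / R ^ m) * ‖b'‖ ^ m := by
              apply mul_le_mul_of_nonneg_right h1 (pow_nonneg (norm_nonneg _) m)
          _ ≤ (1 / R ^ m) * τ ^ m := by
              apply mul_le_mul_of_nonneg_left
                (pow_le_pow_left₀ (norm_nonneg _) hb'τ.le m) (by positivity)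
          _ = (τ / R) ^ m := by rw [one_div, inv_mul_eq_div, ← div_pow]
      have hfin : ‖y‖ ^ (n - 1) ≤ q ^ m := by
        rw [← hPb']
        apply hstep.trans
        exact pow_le_pow_left₀ (by positivity) (le_max_right _ _) m
      linarith
  calc ENNReal.ofReal M < ENNReal.ofReal (M + 1) := by
        rw [ENNReal.ofReal_lt_ofReal_iff (by linarith)]; linarith
    _ ≤ _ := key
end

section
/- Let 0 < r < 1, let G ⊆ ℂ be a bounded domain with r𝔻 ⊆ G ⊆ 𝔻, let n ≥ 2, and for ε > 0 set G^n_ε = { z ∈ Gⁿ : |z₁⋯z_n| < ε }. Fix x, y ∈ r𝔻 ∖ {0} and set X = (x,…,x,0), Y = (0,y,…,y) ∈ ℂⁿ. Then there exists ε₀ > 0 such that for all 0 < ε < ε₀, the Kobayashi pseudo-distance and the Lempert function are different at the pair (X, Y): k_{G^n_ε}(X,Y) < l_{G^n_ε}(X,Y). -/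
open scoped ENNReal BigOperators

/-!
The chain `X → 0 → Y` through the discs `t ↦ Xpt n (r t)` and `t ↦ Ypt n (r t)` bounds
`k_{G^n_ε}(X, Y)` independently of `ε`, whereas `l_{G^n_ε}(X, Y) → ∞` as `ε → 0`.

For the latter, precompose a disc `f` with `f a = X`, `f b = Y` with the Möbius map sending `0`
to `b`, so that it passes through `Y` at `0` and through `X` at a point `w₀` with
`ρ(a, b) = arctanh ‖w₀‖`, and split the product of its coordinates as `g * H`, with
`g` the first coordinate; then `‖g * H‖ < ε`, `g w₀ = x` and `H 0 = y ^ (n - 1)`. By Schwarz–Pick,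
`‖H‖ ≥ ‖y‖ ^ (n - 1) / 2` on a fixed disc around `0`, so `g = O(ε)` there. The maximum principle
for `g / z ^ p` on the surrounding annulus then keeps `‖g‖ < ‖x‖` on any given disc `‖z‖ < R < 1`
once `ε` is small, so `‖w₀‖ ≥ R`.
-/

open Metric Set Filter Topology ComplexConjugate

lemma arctanh_strictMonoOn : StrictMonoOn arctanh (Ioo (-1) 1) := by
  rintro p ⟨hp, hp1⟩ q ⟨-, hq1⟩ hpq
  have hlt : (1 + p) / (1 - p) < (1 + q) / (1 - q) := by
    rw [div_lt_div_iff₀ (by linarith) (by linarith)]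
    nlinarith
  have := Real.log_lt_log (div_pos (by linarith) (by linarith)) hlt
  unfold arctanh
  linarith

lemma exists_lt_arctanh (K : ℝ) : ∃ t, 0 ≤ t ∧ t < 1 ∧ K < arctanh t := by
  set q := Real.exp (2 * |K| + 2)
  have hq : 1 < q := Real.one_lt_exp_iff.2 (by positivity)
  refine ⟨(q - 1) / (q + 1), div_nonneg (by linarith) (by linarith),
    (div_lt_one (by linarith)).2 (by linarith), ?_⟩
  have hratio : (1 + (q - 1) / (q + 1)) / (1 - (q - 1) / (q + 1)) = q := by
    field_simp
    ring
  rw [arctanh, hratio, Real.log_exp]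
  linarith [le_abs_self K]

noncomputable def mobius (b w : ℂ) : ℂ := (w + b) / (1 + conj b * w)

lemma normSq_one_add_conj_mul_sub_normSq_add (b w : ℂ) :
    Complex.normSq (1 + conj b * w) - Complex.normSq (w + b) =
      (1 - Complex.normSq w) * (1 - Complex.normSq b) := by
  simp only [Complex.normSq_apply, Complex.add_re, Complex.add_im, Complex.mul_re,
    Complex.mul_im, Complex.conj_re, Complex.conj_im, Complex.one_re, Complex.one_im]
  ring

lemma norm_add_lt_norm_one_add_conj_mul {b w : ℂ} (hb : ‖b‖ < 1) (hw : ‖w‖ < 1) :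
    ‖w + b‖ < ‖1 + conj b * w‖ := by
  have hb' : Complex.normSq b < 1 := by rw [← Complex.sq_norm]; nlinarith [norm_nonneg b]
  have hw' : Complex.normSq w < 1 := by rw [← Complex.sq_norm]; nlinarith [norm_nonneg w]
  have key := normSq_one_add_conj_mul_sub_normSq_add b w
  rw [← Complex.sq_norm, ← Complex.sq_norm] at key
  exact lt_of_pow_lt_pow_left₀ 2 (norm_nonneg _) (by nlinarith)

lemma one_add_conj_mul_ne_zero {b w : ℂ} (hb : ‖b‖ < 1) (hw : ‖w‖ < 1) :
    1 + conj b * w ≠ 0 :=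
  norm_pos_iff.1 ((norm_nonneg _).trans_lt (norm_add_lt_norm_one_add_conj_mul hb hw))

lemma norm_mobius_lt_one {b w : ℂ} (hb : ‖b‖ < 1) (hw : ‖w‖ < 1) : ‖mobius b w‖ < 1 := by
  rw [mobius, norm_div, div_lt_one (norm_pos_iff.2 (one_add_conj_mul_ne_zero hb hw))]
  exact norm_add_lt_norm_one_add_conj_mul hb hw

lemma mapsTo_mobius {b : ℂ} (hb : ‖b‖ < 1) : MapsTo (mobius b) (ball 0 1) (ball 0 1) :=
  fun _ hw => mem_ball_zero_iff.2 (norm_mobius_lt_one hb (mem_ball_zero_iff.1 hw))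

lemma differentiableOn_mobius {b : ℂ} (hb : ‖b‖ < 1) :
    DifferentiableOn ℂ (mobius b) (ball 0 1) :=
  (differentiableOn_id.add_const b).div ((differentiableOn_id.const_mul _).const_add 1)
    fun _ hw => one_add_conj_mul_ne_zero hb (mem_ball_zero_iff.1 hw)

@[simp]
lemma mobius_zero (b : ℂ) : mobius b 0 = b := by simp [mobius]

@[simp]
lemma mobius_neg_self (b : ℂ) : mobius (-b) b = 0 := by simp [mobius]

lemma mobius_mobius_neg {a b : ℂ} (ha : ‖a‖ < 1) (hb : ‖b‖ < 1) :
    mobius b (mobius (-b) a) = a := by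
  have hD := one_add_conj_mul_ne_zero (norm_neg b ▸ hb) ha
  have hbb := one_add_conj_mul_ne_zero (norm_neg b ▸ hb) hb
  simp only [mobius] at hD ⊢
  rw [div_add' _ _ _ hD, mul_div_assoc', one_add_div hD, div_div_div_cancel_right₀ hD,
    div_eq_iff]
  · simp only [map_neg]
    ring
  · convert hbb using 1
    simp only [map_neg]
    ring

lemma rho_eq_arctanh_norm_mobius (a b : ℂ) : rho a b = arctanh ‖mobius (-b) a‖ := by
  rw [rho, mobius, norm_div, map_neg, neg_mul, ← sub_eq_add_neg, ← sub_eq_add_neg,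
    ← Complex.norm_conj (1 - conj a * b)]
  simp only [map_sub, map_one, map_mul, Complex.conj_conj, mul_comm]

lemma half_norm_le_norm_of_mapsTo_ball {H : ℂ → ℂ} (hd : DifferentiableOn ℂ H (ball 0 1))
    (hH : MapsTo H (ball 0 1) (ball 0 1)) {w : ℂ} (hw : ‖w‖ ≤ ‖H 0‖ / 4) :
    ‖H 0‖ / 2 ≤ ‖H w‖ := by
  set γ := H 0
  have hγ : ‖γ‖ < 1 := mem_ball_zero_iff.1 (hH (mem_ball_self one_pos))
  have hw1 : ‖w‖ < 1 := by linarith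
  have hHw : ‖H w‖ < 1 := mem_ball_zero_iff.1 (hH (mem_ball_zero_iff.2 hw1))
  have hγ' : ‖-γ‖ < 1 := by rwa [norm_neg]
  have hschwarz : ‖mobius (-γ) (H w)‖ ≤ ‖w‖ :=
    Complex.norm_le_norm_of_mapsTo_ball ((differentiableOn_mobius hγ').comp hd hH)
      (((mapsTo_mobius hγ').comp hH).mono_right ball_subset_closedBall)
      (mobius_neg_self γ) hw1
  have hden : ‖1 + conj (-γ) * H w‖ ≤ 2 := by
    calc ‖1 + conj (-γ) * H w‖ ≤ 1 + ‖γ‖ * ‖H w‖ := by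
          simpa using norm_add_le (1 : ℂ) (conj (-γ) * H w)
      _ ≤ 2 := by nlinarith [norm_nonneg γ, norm_nonneg (H w)]
  have hdist : ‖H w - γ‖ ≤ 2 * ‖w‖ := by
    rw [sub_eq_add_neg, ← div_mul_cancel₀ (H w + -γ) (one_add_conj_mul_ne_zero hγ' hHw),
      norm_mul, ← mobius, mul_comm 2]
    exact mul_le_mul hschwarz hden (norm_nonneg _) (norm_nonneg _)
  linarith [norm_sub_norm_le γ (H w), norm_sub_rev γ (H w)]

/-- Maximum principle for `g z / z ^ p` on the annulus `s < ‖z‖ < R`. -/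
lemma norm_le_max_div_pow_mul_pow {g : ℂ → ℂ} {s R A B : ℝ} (hs : 0 < s)
    (hd : DifferentiableOn ℂ g (closedBall 0 R)) (hA : ∀ z : ℂ, ‖z‖ = s → ‖g z‖ ≤ A)
    (hB : ∀ z : ℂ, ‖z‖ = R → ‖g z‖ ≤ B) (p : ℕ) {w : ℂ} (hsw : s < ‖w‖) (hwR : ‖w‖ < R) :
    ‖g w‖ ≤ max (A / s ^ p) (B / R ^ p) * ‖w‖ ^ p := by
  set U : Set ℂ := {z | s < ‖z‖ ∧ ‖z‖ < R}
  have hUopen : IsOpen U :=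
    (isOpen_lt continuous_const continuous_norm).inter
      (isOpen_lt continuous_norm continuous_const)
  have hclosure : closure U ⊆ {z | s ≤ ‖z‖ ∧ ‖z‖ ≤ R} :=
    closure_minimal (fun z hz => ⟨hz.1.le, hz.2.le⟩)
      ((isClosed_le continuous_const continuous_norm).inter
        (isClosed_le continuous_norm continuous_const))
  have hne : ∀ z ∈ closure U, z ^ p ≠ 0 := fun z hz =>
    pow_ne_zero _ (norm_pos_iff.1 (hs.trans_le (hclosure hz).1))
  have hF : DiffContOnCl ℂ (fun z => g z / z ^ p) U :=
    DifferentiableOn.diffContOnCl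
      ((hd.mono fun z hz => mem_closedBall_zero_iff.2 (hclosure hz).2).div
        (differentiableOn_pow p) hne)
  have hfrontier : ∀ z ∈ frontier U, ‖g z / z ^ p‖ ≤ max (A / s ^ p) (B / R ^ p) := by
    intro z hz
    rw [hUopen.frontier_eq] at hz
    obtain ⟨⟨hsz, hzR⟩, hzU⟩ := And.imp_left (@hclosure z) hz
    rw [norm_div, norm_pow]
    rcases hsz.eq_or_lt with hsz | hsz
    · rw [← hsz]
      exact le_max_of_le_left (div_le_div_of_nonneg_right (hA z hsz.symm) (by positivity))
    · have hzR : ‖z‖ = R := hzR.eq_of_not_lt fun h => hzU ⟨hsz, h⟩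
      rw [hzR]
      exact le_max_of_le_right (div_le_div_of_nonneg_right (hB z hzR)
        (pow_pos (hs.trans (hsw.trans hwR)) p).le)
  have hmax := Complex.norm_le_of_forall_mem_frontier_norm_le
    ((isBounded_ball (x := (0 : ℂ)) (r := R)).subset fun z hz => mem_ball_zero_iff.2 hz.2)
    hF hfrontier (subset_closure ⟨hsw, hwR⟩)
  rwa [norm_div, norm_pow, div_le_iff₀ (pow_pos (hs.trans hsw) p)] at hmax

lemma norm_prod_lt_one {ι 𝕜 : Type*} [NormedField 𝕜] {s : Finset ι} {z : ι → 𝕜}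
    (hs : s.Nonempty) (hz : ∀ i ∈ s, ‖z i‖ < 1) : ‖∏ i ∈ s, z i‖ < 1 := by
  classical
  obtain ⟨j, hj⟩ := hs
  rw [norm_prod, ← Finset.mul_prod_erase s _ hj]
  calc ‖z j‖ * ∏ i ∈ s.erase j, ‖z i‖ ≤ ‖z j‖ * 1 :=
        mul_le_mul_of_nonneg_left (Finset.prod_le_one (fun i _ => norm_nonneg _)
          fun i hi => (hz i (Finset.mem_of_mem_erase hi)).le) (norm_nonneg _)
    _ < 1 := by simpa using hz j hj

theorem exists_le_norm_of_norm_mul_lt {c ξ R : ℝ} (hc : 0 < c) (hc1 : c < 1) (hξ : 0 < ξ)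
    (hR : R < 1) :
    ∃ ε₀ > 0, ∀ {g H : ℂ → ℂ} {w₀ : ℂ}, DifferentiableOn ℂ g (ball 0 1) →
      MapsTo g (ball 0 1) (closedBall 0 1) → DifferentiableOn ℂ H (ball 0 1) →
      MapsTo H (ball 0 1) (ball 0 1) → ‖H 0‖ = c →
      (∀ w ∈ ball (0 : ℂ) 1, ‖g w * H w‖ < ε₀) → ‖w₀‖ < 1 → ‖g w₀‖ = ξ → R ≤ ‖w₀‖ := by
  obtain ⟨ρ, hρmax, hρ1⟩ := exists_between (max_lt hR (by linarith : c / 4 < 1))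
  obtain ⟨hRρ, hsρ⟩ := max_lt_iff.1 hρmax
  have hρ : 0 < ρ := by linarith
  -- the outer circle estimate needs `(R / ρ) ^ p < ξ`
  obtain ⟨p, hp⟩ := exists_pow_lt_of_lt_one hξ ((div_lt_one hρ).2 hRρ)
  refine ⟨c * ξ * (c / 4 / ρ) ^ p / 4, by positivity, ?_⟩
  intro g H w₀ hg hg1 hH hH1 hH0 hgH hw₀ hgw₀
  by_contra! hw₀R
  have hHlow : ∀ z : ℂ, ‖z‖ ≤ c / 4 → c / 2 ≤ ‖H z‖ := fun z hz =>
    hH0 ▸ half_norm_le_norm_of_mapsTo_ball hH hH1 (hH0 ▸ hz)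
  have hsρp : (c / 4 / ρ) ^ p ≤ 1 := pow_le_one₀ (by positivity) ((div_le_one hρ).2 hsρ.le)
  rcases le_or_gt ‖w₀‖ (c / 4) with hsmall | hlarge
  · have := hgH w₀ (mem_ball_zero_iff.2 hw₀)
    rw [norm_mul, hgw₀] at this
    nlinarith [mul_le_mul_of_nonneg_left (hHlow w₀ hsmall) hξ.le,
      mul_le_mul_of_nonneg_left hsρp (by positivity : 0 ≤ c * ξ)]
  · have hinner : ∀ z : ℂ, ‖z‖ = c / 4 → ‖g z‖ ≤ ξ * (c / 4 / ρ) ^ p / 2 := by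
      intro z hz
      have hgHz := hgH z (mem_ball_zero_iff.2 (by linarith))
      rw [norm_mul] at hgHz
      nlinarith [mul_le_mul_of_nonneg_left (hHlow z hz.le) (norm_nonneg (g z))]
    have houter : ∀ z : ℂ, ‖z‖ = ρ → ‖g z‖ ≤ 1 := fun z hz =>
      mem_closedBall_zero_iff.1 (hg1 (mem_ball_zero_iff.2 (hz ▸ hρ1)))
    have hmax := norm_le_max_div_pow_mul_pow (by positivity)
      (hg.mono (closedBall_subset_ball hρ1)) hinner houter p hlarge (hw₀R.trans hRρ)
    have hτρ : (‖w₀‖ / ρ) ^ p ≤ (R / ρ) ^ p :=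
      pow_le_pow_left₀ (by positivity) (by gcongr) p
    have hτρ1 : (‖w₀‖ / ρ) ^ p ≤ 1 :=
      pow_le_one₀ (by positivity) ((div_le_one hρ).2 (hw₀R.trans hRρ).le)
    rw [hgw₀, max_mul_of_nonneg _ _ (by positivity)] at hmax
    have hinner' : ξ * (c / 4 / ρ) ^ p / 2 / (c / 4) ^ p * ‖w₀‖ ^ p =
        ξ / 2 * (‖w₀‖ / ρ) ^ p := by
      simp only [div_pow]
      field_simp
    have houter' : 1 / ρ ^ p * ‖w₀‖ ^ p = (‖w₀‖ / ρ) ^ p := by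
      rw [div_pow]
      ring
    rw [hinner', houter'] at hmax
    rcases le_max_iff.1 hmax with h | h <;> nlinarith

section PolyDom

variable {n : ℕ} {G : Set ℂ} {ε : ℝ}

lemma differentiable_Xpt : Differentiable ℂ (Xpt n) :=
  differentiable_pi.2 fun i => by
    unfold Xpt
    split_ifs
    exacts [differentiable_id, differentiable_const 0]

lemma differentiable_Ypt : Differentiable ℂ (Ypt n) :=
  differentiable_pi.2 fun i => by
    unfold Ypt
    split_ifs
    exacts [differentiable_const 0, differentiable_id]

@[simp]
lemma Xpt_zero : Xpt n 0 = 0 := by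
  funext i
  simp [Xpt]

@[simp]
lemma Ypt_zero : Ypt n 0 = 0 := by
  funext i
  simp [Ypt]

lemma Xpt_mem_polyDom (hn : n ≠ 0) {z : ℂ} (hz : z ∈ G) (h0 : 0 ∈ G) (hε : 0 < ε) :
    Xpt n z ∈ polyDom n G ε := by
  refine ⟨fun i => ?_, ?_⟩
  · unfold Xpt
    split_ifs
    exacts [hz, h0]
  · rw [Finset.prod_eq_zero (Finset.mem_univ ⟨n - 1, by omega⟩) (by simp [Xpt]), norm_zero]
    exact hε

lemma Ypt_mem_polyDom (hn : n ≠ 0) {z : ℂ} (hz : z ∈ G) (h0 : 0 ∈ G) (hε : 0 < ε) :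
    Ypt n z ∈ polyDom n G ε := by
  refine ⟨fun i => ?_, ?_⟩
  · unfold Ypt
    split_ifs
    exacts [h0, hz]
  · rw [Finset.prod_eq_zero (Finset.mem_univ ⟨0, by omega⟩) (by simp [Ypt]), norm_zero]
    exact hε

lemma prod_erase_zero_Ypt [NeZero n] (y : ℂ) :
    ∏ i ∈ Finset.univ.erase 0, Ypt n y i = y ^ (n - 1) := by
  have hYpt : ∀ i ∈ Finset.univ.erase (0 : Fin n), Ypt n y i = y := fun i hi =>
    if_neg (Fin.val_ne_zero_iff.2 (Finset.ne_of_mem_erase hi))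
  rw [Finset.prod_congr rfl hYpt, Finset.prod_const, Finset.card_erase_of_mem (Finset.mem_univ _),
    Finset.card_univ, Fintype.card_fin]

end PolyDom

section Kobayashi

variable {n : ℕ} {M : Set (Fin n → ℂ)}

lemma lempert_le_rho {f : ℂ → Fin n → ℂ} {a b : ℂ} (ha : a ∈ uDisc) (hb : b ∈ uDisc)
    (hf : DifferentiableOn ℂ f uDisc) (hfM : MapsTo f uDisc M) :
    lempert M (f a) (f b) ≤ ENNReal.ofReal (rho a b) :=
  sInf_le ⟨f, a, b, ha, hb, hf, hfM, rfl, rfl, rfl⟩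

lemma kobayashi_le_lempert_add_lempert (x z y : Fin n → ℂ) :
    kobayashi M x y ≤ lempert M x z + lempert M z y := by
  rw [lempert, lempert, sInf_eq_iInf', sInf_eq_iInf']
  refine ENNReal.le_iInf_add_iInf fun ⟨_, f₁, a₁, b₁, ha₁, hb₁, hf₁, hf₁M, hx, hz, h₁⟩
    ⟨_, f₂, a₂, b₂, ha₂, hb₂, hf₂, hf₂M, hz', hy, h₂⟩ => (iInf_le _ 1).trans (sInf_le ?_)
  refine ⟨![x, z, y], ![f₁, f₂], ![a₁, a₂], ![b₁, b₂], rfl, rfl, ?_, ?_, ?_⟩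
  · intro i
    fin_cases i
    exacts [hx ▸ hf₁M _ ha₁, hz ▸ hf₁M _ hb₁, hy ▸ hf₂M _ hb₂]
  · intro i
    fin_cases i
    exacts [⟨ha₁, hb₁, hf₁, hf₁M, hx, hz⟩, ⟨ha₂, hb₂, hf₂, hf₂M, hz', hy⟩]
  · simp [Fin.sum_univ_two, h₁, h₂]

end Kobayashi

section PolyDomBounds

variable {n : ℕ} {G : Set ℂ} {x y : ℂ}

theorem exists_le_norm_of_mapsTo_polyDom (hn : 2 ≤ n) (hG1 : G ⊆ ball 0 1) (hx0 : x ≠ 0)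
    (hy0 : y ≠ 0) (hy1 : ‖y‖ < 1) {R : ℝ} (hR : R < 1) :
    ∃ ε₀ > 0, ∀ ε ≤ ε₀, ∀ {F : ℂ → Fin n → ℂ} {w₀ : ℂ}, DifferentiableOn ℂ F (ball 0 1) →
      MapsTo F (ball 0 1) (polyDom n G ε) → ‖w₀‖ < 1 → F 0 = Ypt n y → F w₀ = Xpt n x →
      R ≤ ‖w₀‖ := by
  have : NeZero n := ⟨by omega⟩
  obtain ⟨ε₀, hε₀, hε₀_spec⟩ := exists_le_norm_of_norm_mul_lt
    (pow_pos (norm_pos_iff.2 hy0) (n - 1)) (pow_lt_one₀ (norm_nonneg y) hy1 (by omega))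
    (norm_pos_iff.2 hx0) hR
  refine ⟨ε₀, hε₀, fun ε hε F w₀ hF hFG hw₀ hF0 hFw₀ => ?_⟩
  have hcoord : ∀ i, DifferentiableOn ℂ (fun w => F w i) (ball 0 1) :=
    differentiableOn_pi.1 hF
  have hnorm : ∀ w ∈ ball (0 : ℂ) 1, ∀ i, ‖F w i‖ < 1 := fun w hw i =>
    mem_ball_zero_iff.1 (hG1 ((hFG hw).1 i))
  refine hε₀_spec (g := fun w => F w 0) (H := fun w => ∏ i ∈ Finset.univ.erase 0, F w i)
    (hcoord 0) (fun w hw => mem_closedBall_zero_iff.2 (hnorm w hw 0).le)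
    (DifferentiableOn.fun_finsetProd fun i _ => hcoord i) ?_ ?_ ?_ hw₀ ?_
  · exact fun w hw => mem_ball_zero_iff.2 (norm_prod_lt_one ⟨⟨1, by omega⟩, by simp⟩
      fun i _ => hnorm w hw i)
  · rw [hF0, prod_erase_zero_Ypt, norm_pow]
  · intro w hw
    rw [Finset.mul_prod_erase _ _ (Finset.mem_univ 0)]
    exact (hFG hw).2.trans_le hε
  · rw [hFw₀, Xpt, if_pos (by rw [Fin.val_zero]; omega)]

theorem exists_arctanh_le_lempert_polyDom (hn : 2 ≤ n) (hG1 : G ⊆ ball 0 1) (hx0 : x ≠ 0)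
    (hy0 : y ≠ 0) (hy1 : ‖y‖ < 1) {R : ℝ} (hR0 : 0 ≤ R) (hR : R < 1) :
    ∃ ε₀ > 0, ∀ ε ≤ ε₀,
      ENNReal.ofReal (arctanh R) ≤ lempert (polyDom n G ε) (Xpt n x) (Ypt n y) := by
  obtain ⟨ε₀, hε₀, h⟩ := exists_le_norm_of_mapsTo_polyDom hn hG1 hx0 hy0 hy1 hR
  refine ⟨ε₀, hε₀, fun ε hε => le_sInf ?_⟩
  rintro _ ⟨f, a, b, ha, hb, hf, hfG, hfa, hfb, rfl⟩
  have ha1 : ‖a‖ < 1 := mem_ball_zero_iff.1 ha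
  have hb1 : ‖b‖ < 1 := mem_ball_zero_iff.1 hb
  have hw₀ : ‖mobius (-b) a‖ < 1 := norm_mobius_lt_one (by rwa [norm_neg]) ha1
  have hR_le := h ε hε (F := f ∘ mobius b)
    (hf.comp (differentiableOn_mobius hb1) (mapsTo_mobius hb1))
    (fun w hw => hfG _ (mapsTo_mobius hb1 hw)) hw₀ (by simp [hfb])
    (by simp [mobius_mobius_neg ha1 hb1, hfa])
  rw [rho_eq_arctanh_norm_mobius]
  exact ENNReal.ofReal_le_ofReal (arctanh_strictMonoOn.monotoneOn ⟨by linarith, hR⟩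
    ⟨by linarith [norm_nonneg (mobius (-b) a)], hw₀⟩ hR_le)

theorem tendsto_lempert_polyDom (hn : 2 ≤ n) (hG1 : G ⊆ ball 0 1) (hx0 : x ≠ 0) (hy0 : y ≠ 0)
    (hy1 : ‖y‖ < 1) :
    Tendsto (fun ε => lempert (polyDom n G ε) (Xpt n x) (Ypt n y)) (𝓝[>] 0) (𝓝 ⊤) := by
  refine ENNReal.tendsto_nhds_top_iff_nat.2 fun N => ?_
  obtain ⟨R, hR0, hR1, hNR⟩ := exists_lt_arctanh N
  obtain ⟨ε₀, hε₀, h⟩ := exists_arctanh_le_lempert_polyDom hn hG1 hx0 hy0 hy1 hR0 hR1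
  filter_upwards [Ioo_mem_nhdsGT hε₀] with ε hε
  calc (N : ℝ≥0∞) = ENNReal.ofReal N := (ENNReal.ofReal_natCast N).symm
    _ < ENNReal.ofReal (arctanh R) :=
      (ENNReal.ofReal_lt_ofReal_iff (N.cast_nonneg.trans_lt hNR)).2 hNR
    _ ≤ _ := h ε hε.2.le

theorem kobayashi_polyDom_le (hn : n ≠ 0) {r ε : ℝ} (hr0 : 0 < r) (hrG : ball 0 r ⊆ G)
    (hε : 0 < ε) (hx : x ∈ ball 0 r) (hy : y ∈ ball 0 r) :
    kobayashi (polyDom n G ε) (Xpt n x) (Ypt n y) ≤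
      ENNReal.ofReal (rho (x / r) 0) + ENNReal.ofReal (rho 0 (y / r)) := by
  have h0G : (0 : ℂ) ∈ G := hrG (mem_ball_self hr0)
  have hscale : ∀ t ∈ uDisc, (r : ℂ) * t ∈ G := fun t ht => hrG <| by
    rw [mem_ball_zero_iff, norm_mul, Complex.norm_real, Real.norm_of_nonneg hr0.le]
    exact mul_lt_of_lt_one_right hr0 (mem_ball_zero_iff.1 ht)
  have hdisc : ∀ z ∈ ball (0 : ℂ) r, z / r ∈ uDisc := fun z hz => by
    rw [uDisc, mem_ball_zero_iff, norm_div, Complex.norm_real, Real.norm_of_nonneg hr0.le,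
      div_lt_one hr0]
    exact mem_ball_zero_iff.1 hz
  have h0 : (0 : ℂ) ∈ uDisc := mem_ball_self one_pos
  have hr : (r : ℂ) ≠ 0 := Complex.ofReal_ne_zero.2 hr0.ne'
  have hX := lempert_le_rho (M := polyDom n G ε) (f := fun t => Xpt n (r * t)) (hdisc x hx) h0
    (differentiable_Xpt.comp (differentiable_id.const_mul _)).differentiableOn
    fun t ht => Xpt_mem_polyDom hn (hscale t ht) h0G hε
  have hY := lempert_le_rho (M := polyDom n G ε) (f := fun t => Ypt n (r * t)) h0 (hdisc y hy)
    (differentiable_Ypt.comp (differentiable_id.const_mul _)).differentiableOn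
    fun t ht => Ypt_mem_polyDom hn (hscale t ht) h0G hε
  simp only [mul_div_cancel₀ _ hr, mul_zero, Xpt_zero, Ypt_zero] at hX hY
  exact (kobayashi_le_lempert_add_lempert _ 0 _).trans (add_le_add hX hY)

end PolyDomBounds

theorem kobayashi_lt_lempert_general (r : ℝ) (hr0 : 0 < r)
    (G : Set ℂ)
    (hrG : Metric.ball (0 : ℂ) r ⊆ G) (hG1 : G ⊆ Metric.ball (0 : ℂ) 1)
    (n : ℕ) (hn : 2 ≤ n)
    (x y : ℂ) (hx : x ∈ Metric.ball (0 : ℂ) r) (hx0 : x ≠ 0)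
    (hy : y ∈ Metric.ball (0 : ℂ) r) (hy0 : y ≠ 0) :
    ∃ ε₀ : ℝ, 0 < ε₀ ∧ ∀ ε : ℝ, 0 < ε → ε < ε₀ →
      kobayashi (polyDom n G ε) (Xpt n x) (Ypt n y) <
        lempert (polyDom n G ε) (Xpt n x) (Ypt n y) := by
  have hy1 : ‖y‖ < 1 := mem_ball_zero_iff.1 (hG1 (hrG hy))
  have hbound : ENNReal.ofReal (rho (x / r) 0) + ENNReal.ofReal (rho 0 (y / r)) < ⊤ :=
    ENNReal.add_lt_top.2 ⟨ENNReal.ofReal_lt_top, ENNReal.ofReal_lt_top⟩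
  obtain ⟨ε₀, hε₀, h⟩ := (nhdsGT_basis 0).eventually_iff.1
    ((tendsto_lempert_polyDom hn hG1 hx0 hy0 hy1).eventually (lt_mem_nhds hbound))
  exact ⟨ε₀, hε₀, fun ε hε hεε₀ =>
    (kobayashi_polyDom_le (by omega) hr0 hrG hε hx hy).trans_lt (h ⟨hε, hεε₀⟩)⟩

/-- for all sufficiently small `ε > 0`,
`k_{G^n_ε}(X,Y) < l_{G^n_ε}(X,Y)`. -/
theorem kobayashi_lt_lempert (r : ℝ) (hr0 : 0 < r) (hr1 : r < 1)
    (G : Set ℂ) (hGopen : IsOpen G) (hGconn : IsConnected G)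
    (hGbdd : Bornology.IsBounded G)
    (hrG : Metric.ball (0 : ℂ) r ⊆ G) (hG1 : G ⊆ Metric.ball (0 : ℂ) 1)
    (n : ℕ) (hn : 2 ≤ n)
    (x y : ℂ) (hx : x ∈ Metric.ball (0 : ℂ) r) (hx0 : x ≠ 0)
    (hy : y ∈ Metric.ball (0 : ℂ) r) (hy0 : y ≠ 0) :
    ∃ ε₀ : ℝ, 0 < ε₀ ∧ ∀ ε : ℝ, 0 < ε → ε < ε₀ →
      kobayashi (polyDom n G ε) (Xpt n x) (Ypt n y) <
        lempert (polyDom n G ε) (Xpt n x) (Ypt n y) :=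
  kobayashi_lt_lempert_general r hr0 G hrG hG1 n hn x y hx hx0 hy hy0
end

section
/- Let 0 < r < 1, let G ⊆ ℂ be a bounded domain with r𝔻 ⊆ G ⊆ 𝔻, let n ≥ 2, and for ε > 0 set G^n_ε = { z ∈ Gⁿ : |z₁⋯z_n| < ε }. Fix x, y ∈ r𝔻 ∖ {0} and set X = (x,…,x,0), Y = (0,y,…,y) ∈ ℂⁿ. Then there exists ε₀ > 0 such that for all 0 < ε < ε₀ there do not exist holomorphic maps f : 𝔻 → G^n_ε and p : G^n_ε → 𝔻 together with points a, b ∈ 𝔻 such that p ∘ f = id_𝔻, f(a) = X and f(b) = Y. In particular, there is no holomorphically retracted embedded analytic disc in G^n_ε passing through both X and Y. -/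
open scoped ENNReal BigOperators

noncomputable def Complex.abs : AbsoluteValue ℂ ℝ where
  toFun z := ‖z‖
  map_mul' := norm_mul
  nonneg' := norm_nonneg
  eq_zero' _ := norm_eq_zero
  add_le' := norm_add_le

lemma Complex.norm_eq_abs (z : ℂ) : ‖z‖ = Complex.abs z := rfl

lemma Complex.abs_conj (z : ℂ) : Complex.abs ((starRingEnd ℂ) z) = Complex.abs z :=
  Complex.norm_conj z

lemma Complex.sq_abs (z : ℂ) : Complex.abs z ^ 2 = Complex.normSq z := Complex.sq_norm z

lemma Complex.abs_ofReal (r : ℝ) : Complex.abs (r : ℂ) = |r| := Complex.norm_real r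

lemma Complex.abs_re_le_abs (z : ℂ) : |z.re| ≤ Complex.abs z := Complex.abs_re_le_norm z

lemma Complex.abs_le_abs_of_mapsTo_ball_self {f : ℂ → ℂ} {R : ℝ} {z : ℂ}
    (hd : DifferentiableOn ℂ f (Metric.ball 0 R))
    (h_maps : Set.MapsTo f (Metric.ball 0 R) (Metric.ball 0 R)) (h₀ : f 0 = 0)
    (hz : Complex.abs z < R) : Complex.abs (f z) ≤ Complex.abs z :=
  Complex.norm_le_norm_of_mapsTo_ball hd (h_maps.mono_right Metric.ball_subset_closedBall) h₀ hz

open Metric Set Complex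

local notation "conj'" => starRingEnd ℂ

lemma one_sub_mul_ne_zero {u v : ℂ} (h : Complex.abs u * Complex.abs v < 1) :
    (1:ℂ) - u*v ≠ 0 := by
  intro h0
  have h1 : (1:ℂ) = u * v := sub_eq_zero.mp h0
  have : Complex.abs u * Complex.abs v = 1 := by
    rw [← map_mul, ← h1, map_one]
  linarith

lemma one_sub_conj_mul_ne_zero {a w : ℂ} (ha : Complex.abs a < 1)
    (hw : Complex.abs w < 1) : (1:ℂ) - conj' a * w ≠ 0 := by
  apply one_sub_mul_ne_zero
  rw [Complex.abs_conj]
  nlinarith [Complex.abs.nonneg a, Complex.abs.nonneg w]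

lemma abs_one_sub_conj_mul_le_two {x z : ℂ} (hx : Complex.abs x < 1)
    (hz : Complex.abs z < 1) : Complex.abs (1 - conj' x * z) ≤ 2 := by
  have h8 := norm_sub_le (1:ℂ) (conj' x * z)
  simp only [Complex.norm_eq_abs, norm_one, map_mul, Complex.abs_conj] at h8
  nlinarith [Complex.abs.nonneg x, Complex.abs.nonneg z]

lemma normSq_moebius_key (c z : ℂ) :
    Complex.normSq (1 - conj' c * z) - Complex.normSq (c - z)
      = (1 - Complex.normSq c) * (1 - Complex.normSq z) := by
  simp only [Complex.normSq_sub, Complex.normSq_mul, Complex.normSq_conj,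
    Complex.normSq_one, map_one, one_mul, map_mul, Complex.conj_conj]
  ring_nf

lemma moebius_abs_lt_one {c z : ℂ} (hc : Complex.abs c < 1) (hz : Complex.abs z < 1) :
    Complex.abs ((c - z)/(1 - conj' c * z)) < 1 := by
  have hne : (1:ℂ) - conj' c * z ≠ 0 := by
    apply one_sub_mul_ne_zero
    rw [Complex.abs_conj]
    nlinarith [Complex.abs.nonneg c, Complex.abs.nonneg z]
  have hdpos : 0 < Complex.abs (1 - conj' c * z) := Complex.abs.pos hne
  have hsq : Complex.abs (c - z) ^ 2 < Complex.abs (1 - conj' c * z) ^ 2 := by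
    rw [Complex.sq_abs, Complex.sq_abs]
    have := normSq_moebius_key c z
    have h1 : 0 < 1 - Complex.normSq c := by
      have h := Complex.sq_abs c; nlinarith [Complex.abs.nonneg c]
    have h2 : 0 < 1 - Complex.normSq z := by
      have h := Complex.sq_abs z; nlinarith [Complex.abs.nonneg z]
    nlinarith
  have habs : Complex.abs (c - z) < Complex.abs (1 - conj' c * z) :=
    lt_of_pow_lt_pow_left₀ 2 hdpos.le hsq
  rw [map_div₀, div_lt_one hdpos]
  exact habs

lemma mem_uDisc_abs {z : ℂ} (h : z ∈ Metric.ball (0:ℂ) 1) : Complex.abs z < 1 := by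
  simpa [Complex.norm_eq_abs] using mem_ball_zero_iff.mp h

lemma abs_mem_uDisc {z : ℂ} (h : Complex.abs z < 1) : z ∈ Metric.ball (0:ℂ) 1 :=
  mem_ball_zero_iff.mpr (by simpa [Complex.norm_eq_abs] using h)

lemma schwarz_pick {q : ℂ → ℂ} (hd : DifferentiableOn ℂ q (Metric.ball 0 1))
    (hm : ∀ z ∈ Metric.ball (0:ℂ) 1, q z ∈ Metric.ball (0:ℂ) 1) {u : ℂ}
    (hu : u ∈ Metric.ball (0:ℂ) 1) :
    Complex.abs ((q 0 - q u)/(1 - conj' (q 0) * q u)) ≤ Complex.abs u := by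
  have h0 : (0:ℂ) ∈ Metric.ball (0:ℂ) 1 := by simp
  have hq0 : Complex.abs (q 0) < 1 := mem_uDisc_abs (hm 0 h0)
  have hden : ∀ z ∈ Metric.ball (0:ℂ) 1, (1:ℂ) - conj' (q 0) * q z ≠ 0 := by
    intro z hz
    apply one_sub_mul_ne_zero
    rw [Complex.abs_conj]
    nlinarith [mem_uDisc_abs (hm z hz), Complex.abs.nonneg (q 0), Complex.abs.nonneg (q z)]
  have hd' : DifferentiableOn ℂ (fun z => (q 0 - q z)/(1 - conj' (q 0) * q z))
      (Metric.ball 0 1) :=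
    ((differentiableOn_const _).sub hd).div
      ((differentiableOn_const _).sub ((differentiableOn_const _).mul hd)) hden
  have hmaps : Set.MapsTo (fun z => (q 0 - q z)/(1 - conj' (q 0) * q z))
      (Metric.ball 0 1) (Metric.ball 0 1) := by
    intro z hz
    exact abs_mem_uDisc (moebius_abs_lt_one hq0 (mem_uDisc_abs (hm z hz)))
  have h00 : (fun z => (q 0 - q z)/(1 - conj' (q 0) * q z)) 0 = 0 := by simp
  have := Complex.abs_le_abs_of_mapsTo_ball_self hd' hmaps h00 (mem_uDisc_abs hu)
  simpa using this

lemma moebius_invol {a b : ℂ} (ha : Complex.abs a < 1) (hb : Complex.abs b < 1) :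
    (a - (a - b)/(1 - conj' a * b)) / (1 - conj' a * ((a - b)/(1 - conj' a * b))) = b := by
  have hd : (1:ℂ) - conj' a * b ≠ 0 := by
    apply one_sub_mul_ne_zero; rw [Complex.abs_conj]
    nlinarith [Complex.abs.nonneg a, Complex.abs.nonneg b]
  have ha2 : (1:ℂ) - conj' a * a ≠ 0 := by
    apply one_sub_mul_ne_zero; rw [Complex.abs_conj]
    nlinarith [Complex.abs.nonneg a]
  have e1 : a - (a - b)/(1 - conj' a * b) = b * (1 - conj' a * a)/(1 - conj' a * b) := by
    rw [eq_div_iff hd, sub_mul, div_mul_cancel₀ _ hd]; ring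
  have e2 : (1:ℂ) - conj' a * ((a - b)/(1 - conj' a * b))
      = (1 - conj' a * a)/(1 - conj' a * b) := by
    field_simp; ring
  rw [e1, e2, div_div_div_eq, mul_assoc, mul_div_assoc, mul_comm (1 - conj' a * b),
    div_self (mul_ne_zero ha2 hd), mul_one]

lemma moebius_dist_invariant {c a b : ℂ} (hc : Complex.abs c < 1) (ha : Complex.abs a < 1)
    (hb : Complex.abs b < 1) :
    Complex.abs ((a - b)/(1 - conj' a * b)) =
      Complex.abs (((c - a)/(1 - conj' c * a) - (c - b)/(1 - conj' c * b)) /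
        (1 - conj' ((c - a)/(1 - conj' c * a)) * ((c - b)/(1 - conj' c * b)))) := by
  have nn := fun (z : ℂ) => Complex.abs.nonneg z
  have hd1 : (1:ℂ) - conj' c * a ≠ 0 := by
    apply one_sub_mul_ne_zero; rw [Complex.abs_conj]; nlinarith [nn c, nn a]
  have hd2 : (1:ℂ) - conj' c * b ≠ 0 := by
    apply one_sub_mul_ne_zero; rw [Complex.abs_conj]; nlinarith [nn c, nn b]
  have hd3 : (1:ℂ) - conj' a * b ≠ 0 := by
    apply one_sub_mul_ne_zero; rw [Complex.abs_conj]; nlinarith [nn a, nn b]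
  have hcd1 : (1:ℂ) - c * conj' a ≠ 0 := by
    apply one_sub_mul_ne_zero; rw [Complex.abs_conj]; nlinarith [nn c, nn a]
  have hcd2 : (1:ℂ) - c * conj' b ≠ 0 := by
    apply one_sub_mul_ne_zero; rw [Complex.abs_conj]; nlinarith [nn c, nn b]
  set u := (c - a)/(1 - conj' c * a) with hu
  set v := (c - b)/(1 - conj' c * b) with hv
  have hua : Complex.abs u < 1 := moebius_abs_lt_one hc ha
  have hva : Complex.abs v < 1 := moebius_abs_lt_one hc hb
  have hd4 : (1:ℂ) - conj' u * v ≠ 0 := by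
    apply one_sub_mul_ne_zero; rw [Complex.abs_conj]; nlinarith [nn u, nn v]
  have E : (u - v) * ((1 - conj' a * b) * (1 - conj' c * a)) =
      (1 - conj' u * v) * ((b - a) * (1 - c * conj' a)) := by
    rw [hu, hv]
    simp only [map_div₀, map_sub, map_mul, map_one, Complex.conj_conj]
    have e1 : (1:ℂ) - a * conj' c ≠ 0 := by rw [mul_comm]; exact hd1
    have e2 : (1:ℂ) - b * conj' c ≠ 0 := by rw [mul_comm]; exact hd2
    have e3 : (1:ℂ) - conj' a * c ≠ 0 := by rw [mul_comm]; exact hcd1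
    have e4 : (1:ℂ) - conj' b * c ≠ 0 := by rw [mul_comm]; exact hcd2
    field_simp
    ring
  have Eabs := congrArg Complex.abs E
  rw [map_mul, map_mul, map_mul, map_mul] at Eabs
  have h5 : Complex.abs (1 - c * conj' a) = Complex.abs (1 - conj' c * a) := by
    rw [← Complex.abs_conj (1 - conj' c * a)]
    congr 1
    simp [map_sub, map_mul, Complex.conj_conj]
  have h6 : Complex.abs (b - a) = Complex.abs (a - b) := by
    rw [show b - a = -(a-b) by ring, Complex.abs.map_neg]
  rw [h5, h6] at Eabs
  have hd1p : 0 < Complex.abs (1 - conj' c * a) := Complex.abs.pos hd1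
  have hd3p : 0 < Complex.abs (1 - conj' a * b) := Complex.abs.pos hd3
  have hd4p : 0 < Complex.abs (1 - conj' u * v) := Complex.abs.pos hd4
  rw [map_div₀, map_div₀, div_eq_div_iff hd3p.ne' hd4p.ne']
  nlinarith [Eabs]

set_option maxHeartbeats 1000000 in
lemma real_triangle {A B P Q p q t : ℝ} (hA0 : 0 ≤ A) (hB0 : 0 ≤ B) (hP0 : 0 ≤ P)
    (hQ0 : 0 ≤ Q) (hu : P ≤ p) (hv : Q ≤ q) (hp : p < 1) (hq : q < 1)
    (hA2 : A^2 = P^2 + Q^2 - 2*t) (hB2 : B^2 = 1 + P^2*Q^2 - 2*t)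
    (htl : -(P*Q) ≤ t) (htu : t ≤ P*Q) : A/B ≤ (p+q)/(1+p*q) := by
  have hPQ : P*Q < 1 := by nlinarith
  have hB2pos : 0 < B^2 := by nlinarith [sq_nonneg (1 - P*Q)]
  have hBpos : 0 < B := by
    rcases hB0.lt_or_eq with h|h
    · exact h
    · exfalso; rw [← h] at hB2pos; simp at hB2pos
  have id1 : (P+Q)^2*(1+P^2*Q^2-2*t) - (P^2+Q^2-2*t)*(1+P*Q)^2
      = 2*(t+P*Q)*((1-P^2)*(1-Q^2)) := by ring
  have pos1 : 0 ≤ 2*(t+P*Q)*((1-P^2)*(1-Q^2)) := by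
    apply mul_nonneg (by linarith)
    apply mul_nonneg <;> nlinarith
  have e1 : (A*(1+P*Q))^2 = (P^2+Q^2-2*t)*(1+P*Q)^2 := by rw [mul_pow, hA2]
  have e2 : ((P+Q)*B)^2 = (P+Q)^2*(1+P^2*Q^2-2*t) := by rw [mul_pow, hB2]
  have hsq : (A*(1+P*Q))^2 ≤ ((P+Q)*B)^2 := by rw [e1, e2]; linarith
  have step1 : A * (1 + P*Q) ≤ (P + Q) * B :=
    le_of_pow_le_pow_left₀ two_ne_zero (by positivity) hsq
  have hPQ1 : 0 < 1 + P*Q := by nlinarith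
  have hpq1 : 0 < 1 + p*q := by nlinarith
  have step1' : A / B ≤ (P + Q)/(1 + P*Q) := by
    rw [div_le_div_iff₀ hBpos hPQ1]; linarith
  have hq0 : 0 ≤ q := hQ0.trans hv
  have hp0 : 0 ≤ p := hP0.trans hu
  have hQq : Q*q ≤ 1 := by nlinarith [mul_le_mul_of_nonneg_right hv hq0]
  have hPp : P*p ≤ 1 := by nlinarith [mul_le_mul_of_nonneg_right hu hp0]
  have step2 : (P + Q)/(1 + P*Q) ≤ (p + q)/(1 + p*q) := by
    rw [div_le_div_iff₀ hPQ1 hpq1]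
    nlinarith [mul_nonneg (sub_nonneg.2 hu) (sub_nonneg.2 hQq),
      mul_nonneg (sub_nonneg.2 hv) (sub_nonneg.2 hPp)]
  exact step1'.trans step2

lemma pseudo_triangle {u v : ℂ} {p q : ℝ} (hu : Complex.abs u ≤ p) (hv : Complex.abs v ≤ q)
    (hp : p < 1) (hq : q < 1) :
    Complex.abs ((u - v)/(1 - conj' u * v)) ≤ (p + q)/(1 + p*q) := by
  rw [map_div₀]
  have hA2 : Complex.abs (u - v)^2
      = Complex.abs u^2 + Complex.abs v^2 - 2*(u * conj' v).re := by
    rw [Complex.sq_abs, Complex.normSq_sub, Complex.sq_abs, Complex.sq_abs]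
  have hB2 : Complex.abs (1 - conj' u * v)^2
      = 1 + Complex.abs u^2 * Complex.abs v^2 - 2*(u * conj' v).re := by
    rw [Complex.sq_abs, Complex.normSq_sub, Complex.normSq_one, Complex.normSq_mul,
      Complex.normSq_conj, ← Complex.sq_abs u, ← Complex.sq_abs v]
    have h7 : (1 * conj' (conj' u * v)).re = (u * conj' v).re := by
      rw [one_mul, map_mul, Complex.conj_conj]
    rw [h7]
  have ht : |(u * conj' v).re| ≤ Complex.abs u * Complex.abs v := by
    calc |(u * conj' v).re| ≤ Complex.abs (u * conj' v) := Complex.abs_re_le_abs _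
    _ = Complex.abs u * Complex.abs v := by rw [map_mul, Complex.abs_conj]
  exact real_triangle (Complex.abs.nonneg _) (Complex.abs.nonneg _) (Complex.abs.nonneg _)
    (Complex.abs.nonneg _) hu hv hp hq
    (by rw [hA2]) (by rw [hB2])
    (neg_le_of_abs_le ht) (le_of_abs_le ht)


/-- for all sufficiently small `ε > 0`, there is no holomorphic disc
`f : 𝔻 → G^n_ε` through `X, Y` admitting a holomorphic left inverse
`p : G^n_ε → 𝔻`. -/
theorem no_retraction_through_XY (r : ℝ) (hr0 : 0 < r) (hr1 : r < 1)
    (G : Set ℂ) (hGopen : IsOpen G) (hGconn : IsConnected G)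
    (hGbdd : Bornology.IsBounded G)
    (hrG : Metric.ball (0 : ℂ) r ⊆ G) (hG1 : G ⊆ Metric.ball (0 : ℂ) 1)
    (n : ℕ) (hn : 2 ≤ n)
    (x y : ℂ) (hx : x ∈ Metric.ball (0 : ℂ) r) (hx0 : x ≠ 0)
    (hy : y ∈ Metric.ball (0 : ℂ) r) (hy0 : y ≠ 0) :
    ∃ ε₀ : ℝ, 0 < ε₀ ∧ ∀ ε : ℝ, 0 < ε → ε < ε₀ →
      ¬ ∃ (f : ℂ → Fin n → ℂ) (p : (Fin n → ℂ) → ℂ) (a b : ℂ),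
        a ∈ uDisc ∧ b ∈ uDisc ∧
        DifferentiableOn ℂ f uDisc ∧ (∀ z ∈ uDisc, f z ∈ polyDom n G ε) ∧
        DifferentiableOn ℂ p (polyDom n G ε) ∧ (∀ z ∈ polyDom n G ε, p z ∈ uDisc) ∧
        (∀ z ∈ uDisc, p (f z) = z) ∧ f a = Xpt n x ∧ f b = Ypt n y := by
  have hxa : Complex.abs x < r := by
    simpa [Complex.norm_eq_abs] using mem_ball_zero_iff.mp hx
  have hya : Complex.abs y < r := by
    simpa [Complex.norm_eq_abs] using mem_ball_zero_iff.mp hy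
  have hxpos : 0 < Complex.abs x := Complex.abs.pos hx0
  have hypos : 0 < Complex.abs y := Complex.abs.pos hy0
  set d1 : ℝ := Complex.abs x / r with hd1def
  set d2 : ℝ := Complex.abs y / r with hd2def
  have hd1pos : 0 < d1 := div_pos hxpos hr0
  have hd2pos : 0 < d2 := div_pos hypos hr0
  have hd11 : d1 < 1 := (div_lt_one hr0).2 hxa
  have hd21 : d2 < 1 := (div_lt_one hr0).2 hya
  set T : ℝ := (d1 + d2) / (1 + d1 * d2) with hTdef
  have hden : 0 < 1 + d1 * d2 := by nlinarith
  have hTpos : 0 < T := div_pos (by linarith) hden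
  have hT1 : T < 1 := by rw [div_lt_one hden]; nlinarith
  have hTd1 : d1 ≤ T := by
    have h1 : d1 * d1 ≤ 1 := by nlinarith
    rw [le_div_iff₀ hden]
    nlinarith [mul_le_mul_of_nonneg_left h1 hd2pos.le]
  set s : ℝ := Complex.abs x / 4 with hsdef
  have hs0 : 0 < s := by positivity
  have hsd1 : s < d1 := by
    rw [hd1def, hsdef, div_lt_div_iff₀ (by norm_num) hr0]; nlinarith
  have hsT : s < T := hsd1.trans_le hTd1
  set R' : ℝ := (1 + T) / 2 with hR'def
  have hTR' : T < R' := by rw [hR'def]; linarith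
  have hR'1 : R' < 1 := by rw [hR'def]; linarith
  have hR'0 : 0 < R' := hTpos.trans hTR'
  have hTR'1 : T / R' < 1 := (div_lt_one hR'0).2 hTR'
  obtain ⟨m, hm⟩ := exists_pow_lt_of_lt_one hypos hTR'1
  set t0 : ℝ := Complex.abs x / 2 with ht0def
  have ht0pos : 0 < t0 := by positivity
  refine ⟨Complex.abs y * (s / T) ^ m * t0 ^ (n - 1), by positivity, ?_⟩
  intro ε hε0 hεlt
  rintro ⟨f, p, a, b, ha, hb, hf, hfm, hp, hpm, hpf, hfa, hfb⟩
  have haa : Complex.abs a < 1 := mem_uDisc_abs ha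
  have hba : Complex.abs b < 1 := mem_uDisc_abs hb
  have hn1 : n - 1 < n := by omega
  set i₀ : Fin n := ⟨n - 1, hn1⟩ with hi₀def
  have h0G : (0 : ℂ) ∈ G := hrG (by simpa using hr0)
  -- the zero point of the domain
  have hzero_mem : (fun _ => (0:ℂ)) ∈ polyDom n G ε := by
    refine ⟨fun i => h0G, ?_⟩
    rw [Finset.prod_eq_zero (Finset.mem_univ i₀) rfl]
    simpa using hε0
  set c : ℂ := p (fun _ => 0) with hcdef
  have hc : Complex.abs c < 1 := mem_uDisc_abs (hpm _ hzero_mem)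
  -- Step A: the two analytic discs through X, Y and 0
  have hXmem : ∀ z ∈ Metric.ball (0:ℂ) 1, Xpt n ((r:ℂ) * z) ∈ polyDom n G ε := by
    intro z hz
    have hz1 : Complex.abs z < 1 := mem_uDisc_abs hz
    constructor
    · intro i
      simp only [Xpt]
      split
      · apply hrG
        rw [mem_ball_zero_iff]
        simp only [Complex.norm_eq_abs, map_mul, Complex.abs_ofReal,
          abs_of_pos hr0]
        simpa using mul_lt_mul_of_pos_left hz1 hr0
      · exact h0G
    · rw [Finset.prod_eq_zero (Finset.mem_univ i₀)
        (by simp [Xpt, hi₀def])]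
      simpa using hε0
  have hYmem : ∀ z ∈ Metric.ball (0:ℂ) 1, Ypt n ((r:ℂ) * z) ∈ polyDom n G ε := by
    intro z hz
    have hz1 : Complex.abs z < 1 := mem_uDisc_abs hz
    constructor
    · intro i
      simp only [Ypt]
      split
      · exact h0G
      · apply hrG
        rw [mem_ball_zero_iff]
        simp only [Complex.norm_eq_abs, map_mul, Complex.abs_ofReal,
          abs_of_pos hr0]
        simpa using mul_lt_mul_of_pos_left hz1 hr0
    · rw [Finset.prod_eq_zero (Finset.mem_univ ⟨0, by omega⟩)
        (by simp [Ypt])]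
      simpa using hε0
  have hXdiff : DifferentiableOn ℂ (fun z => Xpt n ((r:ℂ) * z)) (Metric.ball (0:ℂ) 1) := by
    rw [differentiableOn_pi]
    intro i
    simp only [Xpt]
    split
    · exact differentiableOn_id.const_mul _
    · exact differentiableOn_const 0
  have hYdiff : DifferentiableOn ℂ (fun z => Ypt n ((r:ℂ) * z)) (Metric.ball (0:ℂ) 1) := by
    rw [differentiableOn_pi]
    intro i
    simp only [Ypt]
    split
    · exact differentiableOn_const 0
    · exact differentiableOn_id.const_mul _
  have hrC : (r : ℂ) ≠ 0 := by
    simpa using hr0.ne'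
  have hxru : (x / (r:ℂ)) ∈ Metric.ball (0:ℂ) 1 := by
    apply abs_mem_uDisc
    rw [map_div₀, Complex.abs_ofReal, abs_of_pos hr0]
    exact hd11
  have hyru : (y / (r:ℂ)) ∈ Metric.ball (0:ℂ) 1 := by
    apply abs_mem_uDisc
    rw [map_div₀, Complex.abs_ofReal, abs_of_pos hr0]
    exact hd21
  have hQX := schwarz_pick (q := fun z => p (Xpt n ((r:ℂ) * z)))
    (hp.comp hXdiff hXmem) (fun z hz => hpm _ (hXmem z hz)) hxru
  have hQY := schwarz_pick (q := fun z => p (Ypt n ((r:ℂ) * z)))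
    (hp.comp hYdiff hYmem) (fun z hz => hpm _ (hYmem z hz)) hyru
  have hX0 : Xpt n ((r:ℂ) * 0) = (fun _ => (0:ℂ)) := by
    funext i; simp [Xpt]
  have hY0 : Ypt n ((r:ℂ) * 0) = (fun _ => (0:ℂ)) := by
    funext i; simp [Ypt]
  have hXx : Xpt n ((r:ℂ) * (x / (r:ℂ))) = Xpt n x := by
    rw [mul_div_cancel₀ _ hrC]
  have hYy : Ypt n ((r:ℂ) * (y / (r:ℂ))) = Ypt n y := by
    rw [mul_div_cancel₀ _ hrC]
  beta_reduce at hQX hQY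
  rw [hX0, hXx, ← hfa, hpf a ha] at hQX
  rw [hY0, hYy, ← hfb, hpf b hb] at hQY
  have habsxr : Complex.abs (x / (r:ℂ)) = d1 := by
    rw [map_div₀, Complex.abs_ofReal, abs_of_pos hr0]
  have habsyr : Complex.abs (y / (r:ℂ)) = d2 := by
    rw [map_div₀, Complex.abs_ofReal, abs_of_pos hr0]
  rw [habsxr] at hQX
  rw [habsyr] at hQY
  -- hQX : abs ((c - a)/(1 - conj c * a)) ≤ d1, similarly hQY
  have htri := pseudo_triangle (u := (c - a)/(1 - conj' c * a))
    (v := (c - b)/(1 - conj' c * b)) hQX hQY hd11 hd21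
  have hinv := moebius_dist_invariant hc haa hba
  have hW : Complex.abs ((a - b) / (1 - conj' a * b)) ≤ T := by
    rw [hinv]; exact htri
  -- Step B: the Möbius reparametrization moving a to 0
  have hx1 : Complex.abs x < 1 := hxa.trans hr1
  set w0 : ℂ := (a - b) / (1 - conj' a * b) with hw0def
  have hw0T : Complex.abs w0 ≤ T := hW
  have hw0u1 : Complex.abs w0 < 1 := lt_of_le_of_lt hw0T hT1
  set ψ : ℂ → ℂ := fun w => (a - w) / (1 - conj' a * w) with hψdef
  have hψden : ∀ w ∈ Metric.ball (0:ℂ) 1, (1:ℂ) - conj' a * w ≠ 0 := fun w hw =>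
    one_sub_conj_mul_ne_zero haa (mem_uDisc_abs hw)
  have hψdiff : DifferentiableOn ℂ ψ (Metric.ball (0:ℂ) 1) :=
    ((differentiableOn_const _).sub differentiableOn_id).div
      ((differentiableOn_const _).sub
        ((differentiableOn_const _).mul differentiableOn_id)) hψden
  have hψmaps : ∀ w ∈ Metric.ball (0:ℂ) 1, ψ w ∈ Metric.ball (0:ℂ) 1 := fun w hw =>
    abs_mem_uDisc (moebius_abs_lt_one haa (mem_uDisc_abs hw))
  have hψ0 : ψ 0 = a := by simp [hψdef]
  have hψw0 : ψ w0 = b := moebius_invol haa hba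
  have hFdiff : DifferentiableOn ℂ (fun w => f (ψ w)) (Metric.ball (0:ℂ) 1) :=
    hf.comp hψdiff hψmaps
  have hFmem : ∀ w ∈ Metric.ball (0:ℂ) 1, f (ψ w) ∈ polyDom n G ε := fun w hw =>
    hfm _ (hψmaps w hw)
  have hs1 : s < 1 := by rw [hsdef]; linarith
  -- lower bound for the non-special coordinates near 0
  have hlow : ∀ w : ℂ, Complex.abs w ≤ s → ∀ i : Fin n, i ≠ i₀ →
      t0 ≤ Complex.abs (f (ψ w) i) := by
    intro w hws i hi
    have hwu : w ∈ Metric.ball (0:ℂ) 1 := abs_mem_uDisc (lt_of_le_of_lt hws hs1)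
    have hival : (i : ℕ) < n - 1 := by
      rcases lt_or_ge (i : ℕ) (n-1) with h | h
      · exact h
      · exfalso
        apply hi
        apply Fin.ext
        have h2 := i.2
        simp only [hi₀def]
        omega
    have hqd : DifferentiableOn ℂ (fun w' => f (ψ w') i) (Metric.ball (0:ℂ) 1) :=
      (differentiableOn_pi.mp hFdiff) i
    have hqm : ∀ w' ∈ Metric.ball (0:ℂ) 1, f (ψ w') i ∈ Metric.ball (0:ℂ) 1 :=
      fun w' hw' => hG1 ((hFmem w' hw').1 i)
    have hsp := schwarz_pick hqd hqm hwu
    beta_reduce at hsp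
    have hq0 : f (ψ 0) i = x := by
      rw [hψ0, hfa]
      simp [Xpt, hival]
    rw [hq0] at hsp
    set z := f (ψ w) i with hzdef
    have hz1 : Complex.abs z < 1 := mem_uDisc_abs (hqm w hwu)
    have hdenom : Complex.abs (1 - conj' x * z) ≤ 2 :=
      abs_one_sub_conj_mul_le_two hx1 hz1
    have hden0 : (1:ℂ) - conj' x * z ≠ 0 := one_sub_conj_mul_ne_zero hx1 hz1
    rw [map_div₀, div_le_iff₀ (Complex.abs.pos hden0)] at hsp
    have h9 : Complex.abs (x - z) ≤ s * 2 :=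
      hsp.trans (mul_le_mul hws hdenom (Complex.abs.nonneg _) hs0.le)
    have h10 : Complex.abs x ≤ Complex.abs (x - z) + Complex.abs z := by
      simpa using Complex.abs.add_le (x - z) z
    rw [ht0def]
    rw [hsdef] at h9
    linarith
  -- smallness of the special coordinate near 0
  have hg_small : ∀ w : ℂ, Complex.abs w ≤ s →
      Complex.abs (f (ψ w) i₀) * t0 ^ (n - 1) < ε := by
    intro w hws
    have hwu : w ∈ Metric.ball (0:ℂ) 1 := abs_mem_uDisc (lt_of_le_of_lt hws hs1)
    have hprod : Complex.abs (∏ i, f (ψ w) i) < ε := (hFmem w hwu).2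
    rw [map_prod] at hprod
    rw [← Finset.mul_prod_erase Finset.univ _ (Finset.mem_univ i₀)] at hprod
    have hcard : (Finset.univ.erase i₀).card = n - 1 := by
      rw [Finset.card_erase_of_mem (Finset.mem_univ i₀), Finset.card_univ,
        Fintype.card_fin]
    have hprodlow : t0 ^ (n - 1) ≤ ∏ i ∈ Finset.univ.erase i₀, Complex.abs (f (ψ w) i) := by
      rw [← hcard, ← Finset.prod_const]
      exact Finset.prod_le_prod (fun i _ => ht0pos.le)
        (fun i hi => hlow w hws i (Finset.ne_of_mem_erase hi))
    calc Complex.abs (f (ψ w) i₀) * t0 ^ (n - 1)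
        ≤ Complex.abs (f (ψ w) i₀) * ∏ i ∈ Finset.univ.erase i₀, Complex.abs (f (ψ w) i) :=
          mul_le_mul_of_nonneg_left hprodlow (Complex.abs.nonneg _)
      _ < ε := hprod
  have hgw0 : f (ψ w0) i₀ = y := by
    rw [hψw0, hfb]
    simp only [Ypt, hi₀def]
    rw [if_neg (by omega)]
  -- two cases according to the position of w0
  rcases le_or_gt (Complex.abs w0) s with hcase | hcase
  · -- w0 is already in the small disc
    have h11 := hg_small w0 hcase
    rw [hgw0] at h11
    have h12 : (s / T) ^ m ≤ 1 := by
      apply pow_le_one₀ (by positivity)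
      rw [div_le_one hTpos]
      exact hsT.le
    have h12' : Complex.abs y * (s/T)^m * t0^(n-1) ≤ Complex.abs y * t0^(n-1) := by
      have hnn : 0 ≤ Complex.abs y * t0^(n-1) := by positivity
      calc Complex.abs y * (s/T)^m * t0^(n-1)
          = (Complex.abs y * t0^(n-1)) * (s/T)^m := by ring
        _ ≤ (Complex.abs y * t0^(n-1)) * 1 := mul_le_mul_of_nonneg_left h12 hnn
        _ = Complex.abs y * t0^(n-1) := mul_one _
    linarith
  · -- the annulus maximum principle
    set U : Set ℂ := Metric.ball (0:ℂ) R' \ Metric.closedBall 0 s with hUdef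
    set H : ℂ → ℂ := fun w => f (ψ w) i₀ * ((s:ℂ) / w) ^ m with hHdef
    set V : Set ℂ := Metric.ball (0:ℂ) 1 \ Metric.closedBall 0 (s/2) with hVdef
    have hVne : ∀ w ∈ V, w ≠ 0 := by
      intro w hw h0
      rw [h0] at hw
      exact hw.2 (Metric.mem_closedBall_self (by positivity))
    have hVsub : V ⊆ Metric.ball (0:ℂ) 1 := Set.diff_subset
    have hHdiffV : DifferentiableOn ℂ H V := by
      apply DifferentiableOn.mul
      · exact ((differentiableOn_pi.mp hFdiff) i₀).mono hVsub
      · exact ((differentiableOn_const _).div differentiableOn_id hVne).pow m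
    have hUV : U ⊆ V := by
      intro w hw
      constructor
      · exact Metric.ball_subset_ball hR'1.le hw.1
      · intro hmem
        apply hw.2
        exact Metric.closedBall_subset_closedBall (by linarith) hmem
    have hclosureU : closure U ⊆ V := by
      intro w hw
      have h13 : w ∈ Metric.closedBall (0:ℂ) R' := by
        have := closure_mono (Set.diff_subset : U ⊆ Metric.ball (0:ℂ) R') hw
        rwa [closure_ball 0 hR'0.ne'] at this
      have h14 : w ∉ Metric.ball (0:ℂ) s := by
        have hUsub : U ⊆ (Metric.ball (0:ℂ) s)ᶜ := by
          intro z hz hmem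
          exact hz.2 (Metric.ball_subset_closedBall hmem)
        have := closure_minimal hUsub (Metric.isOpen_ball.isClosed_compl) hw
        exact this
      constructor
      · have : ‖w‖ ≤ R' := by simpa using h13
        exact mem_ball_zero_iff.mpr (lt_of_le_of_lt this hR'1)
      · intro hmem
        apply h14
        rw [Metric.mem_closedBall] at hmem
        rw [Metric.mem_ball]
        have : dist w 0 ≤ s/2 := hmem
        linarith
    have hDCC : DiffContOnCl ℂ H U :=
      ⟨hHdiffV.mono hUV, hHdiffV.continuousOn.mono hclosureU⟩
    set C : ℝ := max (ε / t0 ^ (n - 1)) ((s / R') ^ m) with hCdef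
    have hHabs : ∀ w : ℂ, w ≠ 0 → Complex.abs (H w)
        = Complex.abs (f (ψ w) i₀) * (s / Complex.abs w) ^ m := by
      intro w hw
      rw [hHdef]
      simp only [map_mul, map_pow, map_div₀, Complex.abs_ofReal, abs_of_pos hs0]
    have hfrontier : ∀ z ∈ frontier U, ‖H z‖ ≤ C := by
      intro z hz
      have hz' : z ∈ Metric.sphere (0:ℂ) R' ∪ Metric.sphere (0:ℂ) s := by
        have h15 : frontier U ⊆ frontier (Metric.ball (0:ℂ) R')
            ∪ frontier ((Metric.closedBall (0:ℂ) s)ᶜ) := by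
          rw [hUdef, Set.diff_eq]
          intro z hz
          rcases frontier_inter_subset _ _ hz with h | h
          · exact Or.inl h.1
          · exact Or.inr h.2
        rcases h15 hz with h | h
        · left; rwa [frontier_ball 0 hR'0.ne'] at h
        · right; rwa [frontier_compl, frontier_closedBall 0 hs0.ne'] at h
      rw [Complex.norm_eq_abs]
      rcases hz' with h | h
      · have hzabs : Complex.abs z = R' := by
          simpa [Complex.norm_eq_abs] using mem_sphere_zero_iff_norm.mp h
        have hz0 : z ≠ 0 := by
          intro h0; rw [h0] at hzabs; simp at hzabs; exact hR'0.ne hzabs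
        have hzu : z ∈ Metric.ball (0:ℂ) 1 := abs_mem_uDisc (by rw [hzabs]; exact hR'1)
        rw [hHabs z hz0, hzabs]
        have h16 : Complex.abs (f (ψ z) i₀) ≤ 1 :=
          (mem_uDisc_abs (hG1 ((hFmem z hzu).1 i₀))).le
        calc Complex.abs (f (ψ z) i₀) * (s / R') ^ m ≤ 1 * (s / R') ^ m :=
              mul_le_mul_of_nonneg_right h16 (by positivity)
          _ = (s / R') ^ m := one_mul _
          _ ≤ C := le_max_right _ _
      · have hzabs : Complex.abs z = s := by
          simpa [Complex.norm_eq_abs] using mem_sphere_zero_iff_norm.mp h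
        have hz0 : z ≠ 0 := by
          intro h0; rw [h0] at hzabs; simp at hzabs; exact hs0.ne hzabs
        rw [hHabs z hz0, hzabs, div_self hs0.ne', one_pow, mul_one]
        have h17 := hg_small z hzabs.le
        have h18 : Complex.abs (f (ψ z) i₀) ≤ ε / t0 ^ (n - 1) := by
          rw [le_div_iff₀ (pow_pos ht0pos _)]
          exact h17.le
        exact h18.trans (le_max_left _ _)
    have hw0U : w0 ∈ closure U := by
      apply subset_closure
      constructor
      · exact mem_ball_zero_iff.mpr (by
          rw [Complex.norm_eq_abs]; exact lt_of_le_of_lt hw0T hTR')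
      · intro hmem
        rw [Metric.mem_closedBall] at hmem
        have : Complex.abs w0 ≤ s := by
          simpa [Complex.dist_eq, Complex.norm_eq_abs] using hmem
        linarith
    have hmax := Complex.norm_le_of_forall_mem_frontier_norm_le
      (Bornology.IsBounded.subset Metric.isBounded_ball Set.diff_subset) hDCC hfrontier hw0U
    rw [Complex.norm_eq_abs] at hmax
    have hw00 : w0 ≠ 0 := by
      intro h0
      rw [h0] at hcase
      simp at hcase
      linarith
    rw [hHabs w0 hw00, hgw0] at hmax
    -- lower bound for the left side
    have h19 : (s / T) ^ m ≤ (s / Complex.abs w0) ^ m := by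
      apply pow_le_pow_left₀ (by positivity) ?_ m
      exact div_le_div_of_nonneg_left hs0.le (by linarith) hw0T
    have h20 : Complex.abs y * (s / T) ^ m ≤ Complex.abs y * (s / Complex.abs w0) ^ m :=
      mul_le_mul_of_nonneg_left h19 hypos.le
    have h21 : ε / t0 ^ (n - 1) < Complex.abs y * (s / T) ^ m := by
      rw [div_lt_iff₀ (pow_pos ht0pos _)]
      exact hεlt
    have h22 : (s / R') ^ m < Complex.abs y * (s / T) ^ m := by
      have hkey : (s / R') ^ m = (T / R') ^ m * (s / T) ^ m := by
        rw [← mul_pow]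
        congr 1
        field_simp
      rw [hkey]
      exact mul_lt_mul_of_pos_right hm (by positivity)
    have h23 : C < Complex.abs y * (s / T) ^ m := max_lt h21 h22
    linarith
end
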